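/- Fix t > 0 and set cₙ = e^{t(n+1)²/2} for n ≥ 0. In ℓ²(ℕ,ℂ) with standard orthonormal basis (eₙ), let e₊(ψ) = Σₙ (n+1)·ψₙ/cₙ and e₋(ψ) = Σₙ (−1)ⁿ(n+1)·ψₙ/cₙ. Then the closed linear span of the vectors {cₙ·eₙ − (n+1)·c₀·e₀ : n ≥ 1} equals ker e₊, and the closed linear span of the vectors {cₙ·eₙ + (−1)ⁿ·((n+1)/2)·c₁·e₁ : n ≥ 0, n ≠ 1} equals ker e₋. -/

import Mathlib

/-!
Each functional is `φ ψ = ∑' n, w n * ψ n` with `w m ≠ 0` (`m = 0` for `e₊`, `m = 1` for `e₋`),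
and each spanning vector lies in `ker φ` and is supported on `{n, m}` with nonzero `n`-th
coordinate. A vector `z` orthogonal to all of them therefore has `z n = conj (w n) * a` for one
scalar `a`, and then `conj a * φ z = ⟪z, z⟫`; so `z ∈ ker φ` forces `z = 0`. In a Hilbert space
this means that the closed span exhausts `ker φ`.
-/

open scoped ENNReal

noncomputable section

/-- The quantum Hilbert space `ℓ²(ℕ,ℂ)` of `SU(2)` lattice gauge theory. -/
abbrev QH : Type := lp (fun _ : ℕ => ℂ) 2

open Submodule in
theorem Submodule.topologicalClosure_span_eq_of_orthogonal_inf_eq_bot {𝕜 E : Type*} [RCLike 𝕜]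
    [NormedAddCommGroup E] [InnerProductSpace 𝕜 E] [CompleteSpace E] {S : Set E}
    {K : Submodule 𝕜 E} (hK : IsClosed (K : Set E)) (hSK : S ⊆ K)
    (h : (span 𝕜 S)ᗮ ⊓ K = ⊥) :
    (span 𝕜 S).topologicalClosure = K := by
  have hle : (span 𝕜 S).topologicalClosure ≤ K :=
    topologicalClosure_minimal _ (span_le.2 hSK) hK
  have : CompleteSpace (span 𝕜 S).topologicalClosure :=
    (span 𝕜 S).isClosed_topologicalClosure.completeSpace_coe
  simpa [orthogonal_closure, h] using sup_orthogonal_inf_of_hasOrthogonalProjection hle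

open ComplexConjugate
open scoped InnerProductSpace

section
variable {φ : QH →L[ℂ] ℂ} {w : ℕ → ℂ}

theorem apply_single_of_eq_tsum (hφ : ∀ ψ : QH, φ ψ = ∑' n, w n * ψ n) (n : ℕ) :
    φ (lp.single 2 n 1) = w n := by
  rw [hφ, tsum_eq_single n fun k hk => by simp [hk], lp.single_apply_self, mul_one]

theorem eq_zero_of_apply_eq_zero_of_eq_conj_mul (hφ : ∀ ψ : QH, φ ψ = ∑' n, w n * ψ n)
    {z : QH} {a : ℂ} (hz : ∀ n, z n = conj (w n) * a) (hφz : φ z = 0) : z = 0 := by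
  have : ⟪z, z⟫_ℂ = conj a * φ z := by
    rw [lp.inner_eq_tsum, hφ, ← tsum_mul_left]
    refine tsum_congr fun n => ?_
    rw [RCLike.inner_apply, hz n]
    simp only [map_mul, Complex.conj_conj]
    ring
  rwa [hφz, mul_zero, inner_self_eq_zero] at this

theorem eq_conj_mul_of_inner_eq_zero (hφ : ∀ ψ : QH, φ ψ = ∑' n, w n * ψ n) {m n : ℕ}
    {a b : ℂ} (ha : a ≠ 0) (hm : w m ≠ 0)
    (hker : φ (a • lp.single 2 n 1 + b • lp.single 2 m 1) = 0) {z : QH}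
    (hz : ⟪a • lp.single 2 n 1 + b • lp.single 2 m 1, z⟫_ℂ = 0) :
    z n = conj (w n) * (z m / conj (w m)) := by
  rw [map_add, map_smul, map_smul, apply_single_of_eq_tsum hφ,
    apply_single_of_eq_tsum hφ, smul_eq_mul, smul_eq_mul] at hker
  rw [inner_add_left, inner_smul_left, inner_smul_left, lp.inner_single_left,
    lp.inner_single_left, RCLike.inner_apply, RCLike.inner_apply, map_one, mul_one, mul_one] at hz
  have hb : conj b = -conj a * conj (w n) / conj (w m) := by
    rw [eq_div_iff ((map_ne_zero (starRingEnd ℂ)).2 hm)]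
    simpa using congr_arg conj (eq_neg_of_add_eq_zero_right hker)
  apply mul_left_cancel₀ ((map_ne_zero (starRingEnd ℂ)).2 ha)
  rw [hb] at hz
  linear_combination hz

theorem topologicalClosure_span_eq_ker_of_eq_tsum (hφ : ∀ ψ : QH, φ ψ = ∑' n, w n * ψ n)
    {m : ℕ} (hm : w m ≠ 0) {S : Set QH} (hSφ : ∀ v ∈ S, φ v = 0)
    (hS : ∀ n ≠ m, ∃ a b : ℂ, a ≠ 0 ∧ a • lp.single 2 n 1 + b • lp.single 2 m 1 ∈ S) :
    (Submodule.span ℂ S).topologicalClosure = LinearMap.ker (φ : QH →ₗ[ℂ] ℂ) := by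
  refine Submodule.topologicalClosure_span_eq_of_orthogonal_inf_eq_bot φ.isClosed_ker hSφ ?_
  refine (Submodule.eq_bot_iff _).2 fun z ⟨hzS, hzφ⟩ => ?_
  refine eq_zero_of_apply_eq_zero_of_eq_conj_mul hφ (a := z m / conj (w m)) (fun n => ?_) hzφ
  rcases eq_or_ne n m with rfl | hn
  · exact (mul_div_cancel₀ _ ((map_ne_zero (starRingEnd ℂ)).2 hm)).symm
  · obtain ⟨a, b, ha, hv⟩ := hS n hn
    exact eq_conj_mul_of_inner_eq_zero hφ ha hm (hSφ _ hv)
      ((Submodule.mem_orthogonal _ _).1 hzS _ (Submodule.subset_span hv))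

end

theorem basis_of_vanishing_subspaces_general (t : ℝ)
    (c : ℕ → ℝ) (hc : ∀ n : ℕ, c n = Real.exp (t * ((n : ℝ) + 1) ^ 2 / 2))
    (ep em : QH →L[ℂ] ℂ)
    (hep : ∀ ψ : QH, ep ψ = ∑' n : ℕ, (((n : ℝ) + 1 : ℝ) : ℂ) * ψ n / (c n : ℂ))
    (hem : ∀ ψ : QH, em ψ =
      ∑' n : ℕ, (-1 : ℂ) ^ n * ((((n : ℝ) + 1 : ℝ) : ℂ) * ψ n / (c n : ℂ))) :
    (Submodule.span ℂ
        {v : QH | ∃ n : ℕ, 1 ≤ n ∧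
          v = (c n : ℂ) • lp.single 2 n 1
                - ((((n : ℝ) + 1) * c 0 : ℝ) : ℂ) • lp.single 2 0 1}).topologicalClosure
      = LinearMap.ker (ep : QH →ₗ[ℂ] ℂ) ∧
    (Submodule.span ℂ
        {v : QH | ∃ n : ℕ, n ≠ 1 ∧
          v = (c n : ℂ) • lp.single 2 n 1
                + (-1 : ℂ) ^ n • (((((n : ℝ) + 1) / 2) * c 1 : ℝ) : ℂ) •
                    lp.single 2 1 1}).topologicalClosure
      = LinearMap.ker (em : QH →ₗ[ℂ] ℂ) := by
  have hc0 (n : ℕ) : (c n : ℂ) ≠ 0 := Complex.ofReal_ne_zero.2 (hc n ▸ (Real.exp_pos _).ne')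
  have hep' : ∀ ψ : QH, ep ψ = ∑' n : ℕ, (((n : ℝ) + 1 : ℝ) : ℂ) / c n * ψ n := fun ψ => by
    rw [hep]; exact tsum_congr fun n => by ring
  have hem' : ∀ ψ : QH, em ψ = ∑' n : ℕ, (-1 : ℂ) ^ n * (((n : ℝ) + 1 : ℝ) : ℂ) / c n * ψ n :=
    fun ψ => by rw [hem]; exact tsum_congr fun n => by ring
  constructor
  · refine topologicalClosure_span_eq_ker_of_eq_tsum hep' (m := 0) (by simp [hc0]) ?_ ?_
    · rintro v ⟨n, -, rfl⟩
      rw [map_sub, map_smul, map_smul, apply_single_of_eq_tsum hep',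
        apply_single_of_eq_tsum hep', smul_eq_mul, smul_eq_mul]
      push_cast
      field_simp [hc0 n, hc0 0]
      ring
    · intro n hn
      exact ⟨c n, _, hc0 n, n, Nat.one_le_iff_ne_zero.2 hn, by rw [neg_smul, sub_eq_add_neg]⟩
  · refine topologicalClosure_span_eq_ker_of_eq_tsum hem' (m := 1) (by simp [hc0]) ?_ ?_
    · rintro v ⟨n, -, rfl⟩
      rw [map_add, map_smul, map_smul, map_smul, apply_single_of_eq_tsum hem',
        apply_single_of_eq_tsum hem', smul_eq_mul, smul_eq_mul, smul_eq_mul]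
      push_cast
      field_simp [hc0 n, hc0 1]
      ring
    · intro n hn
      exact ⟨c n, _, hc0 n, n, hn, by rw [smul_smul]⟩

/-- With `cₙ = e^{t(n+1)²/2}` and the evaluation functionals
`e₊(ψ) = Σₙ(n+1)ψₙ/cₙ`, `e₋(ψ) = Σₙ(−1)ⁿ(n+1)ψₙ/cₙ`, the closed span of
`{cₙeₙ − (n+1)c₀e₀ : n ≥ 1}` is `ker e₊` and the closed span of
`{cₙeₙ + (−1)ⁿ((n+1)/2)c₁e₁ : n ≠ 1}` is `ker e₋`. -/
theorem basis_of_vanishing_subspaces (t : ℝ) (ht : 0 < t)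
    (c : ℕ → ℝ) (hc : ∀ n : ℕ, c n = Real.exp (t * ((n : ℝ) + 1) ^ 2 / 2))
    (ep em : QH →L[ℂ] ℂ)
    (hep : ∀ ψ : QH, ep ψ = ∑' n : ℕ, (((n : ℝ) + 1 : ℝ) : ℂ) * ψ n / (c n : ℂ))
    (hem : ∀ ψ : QH, em ψ =
      ∑' n : ℕ, (-1 : ℂ) ^ n * ((((n : ℝ) + 1 : ℝ) : ℂ) * ψ n / (c n : ℂ))) :
    (Submodule.span ℂ
        {v : QH | ∃ n : ℕ, 1 ≤ n ∧
          v = (c n : ℂ) • lp.single 2 n 1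
                - ((((n : ℝ) + 1) * c 0 : ℝ) : ℂ) • lp.single 2 0 1}).topologicalClosure
      = LinearMap.ker (ep : QH →ₗ[ℂ] ℂ) ∧
    (Submodule.span ℂ
        {v : QH | ∃ n : ℕ, n ≠ 1 ∧
          v = (c n : ℂ) • lp.single 2 n 1
                + (-1 : ℂ) ^ n • (((((n : ℝ) + 1) / 2) * c 1 : ℝ) : ℂ) •
                    lp.single 2 1 1}).topologicalClosure
      = LinearMap.ker (em : QH →ₗ[ℂ] ℂ) :=
  basis_of_vanishing_subspaces_general t c hc ep em hep hem

end
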